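/- arXiv:1004.1687 — 3 statements merged into one kernel-verified Lean document; each statement's English description precedes it below -/
import Mathlib

section
/- Let U(z) = ∏_{i=1}^{8}(z - u_i) with coefficients m_j defined via U(z) = Σ_{i=0}^{8}(-1)^i m_{8-i} z^i, and let h ∈ ℂ \ {0}. Then there exists a polynomial P_d(h, ·) such that for all nonzero z with z² ≠ h, (z - h/z)·P_d(h, z + h/z) = z⁵·U(h/z) - (h/z)⁵·U(z). Moreover P_d(h,x) = m₈x⁴ - h m₇x³ + (h²m₆ - 3h m₈ - h⁵m₀)x² + (2h²m₇ - h³m₅ + h⁵m₁)x + (h⁶m₀ - h⁵m₂ + h⁴m₄ - h³m₆ + h²m₈). -/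
/-!
Under `z ↦ h / z` the expression `z ^ 5 U(h / z) - (h / z) ^ 5 U(z)` changes sign, so it is
divisible by `z - h / z` with a quotient symmetric in `z` and `w = h / z`; a symmetric polynomial
in `z, w` with `z w = h` is a polynomial in `z + w`. Writing `h = z w`, the claimed identity is a
polynomial identity in `z, w`.
-/

open Polynomial Finset

variable {R : Type*} [CommRing R]

/-- The quartic `P_d(h, ·)` attached to the coefficients `m₀, …, m₈`. -/
noncomputable def antisymmetricQuotient (m : ℕ → R) (h : R) : R[X] :=
  C (m 8) * X ^ 4 - C (h * m 7) * X ^ 3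
    + C (h ^ 2 * m 6 - 3 * h * m 8 - h ^ 5 * m 0) * X ^ 2
    + C (2 * h ^ 2 * m 7 - h ^ 3 * m 5 + h ^ 5 * m 1) * X
    + C (h ^ 6 * m 0 - h ^ 5 * m 2 + h ^ 4 * m 4 - h ^ 3 * m 6 + h ^ 2 * m 8)

theorem eval_antisymmetricQuotient (m : ℕ → R) (h x : R) :
    (antisymmetricQuotient m h).eval x =
      m 8 * x ^ 4 - h * m 7 * x ^ 3 + (h ^ 2 * m 6 - 3 * h * m 8 - h ^ 5 * m 0) * x ^ 2
        + (2 * h ^ 2 * m 7 - h ^ 3 * m 5 + h ^ 5 * m 1) * x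
        + (h ^ 6 * m 0 - h ^ 5 * m 2 + h ^ 4 * m 4 - h ^ 3 * m 6 + h ^ 2 * m 8) := by
  simp [antisymmetricQuotient]

theorem sub_mul_eval_antisymmetricQuotient (m : ℕ → R) (z w : R) :
    (z - w) * (antisymmetricQuotient m (z * w)).eval (z + w) =
      z ^ 5 * ∑ i ∈ range 9, (-1 : R) ^ i * m (8 - i) * w ^ i
        - w ^ 5 * ∑ i ∈ range 9, (-1 : R) ^ i * m (8 - i) * z ^ i := by
  simp only [eval_antisymmetricQuotient, sum_range_succ, sum_range_zero]
  ring

open Finset in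
theorem stmt2_general (u : Fin 8 → ℂ) (m : ℕ → ℂ)
    (hm : ∀ z : ℂ, ∏ i, (z - u i) = ∑ i ∈ Finset.range 9, (-1 : ℂ) ^ i * m (8 - i) * z ^ i)
    (h : ℂ) :
    ∃ P : Polynomial ℂ,
      (∀ z : ℂ, z ≠ 0 → z ^ 2 ≠ h →
        (z - h / z) * P.eval (z + h / z) =
          z ^ 5 * (∏ i, (h / z - u i)) - (h / z) ^ 5 * ∏ i, (z - u i)) ∧
      (∀ x : ℂ, P.eval x =
        m 8 * x ^ 4 - h * m 7 * x ^ 3 + (h ^ 2 * m 6 - 3 * h * m 8 - h ^ 5 * m 0) * x ^ 2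
          + (2 * h ^ 2 * m 7 - h ^ 3 * m 5 + h ^ 5 * m 1) * x
          + (h ^ 6 * m 0 - h ^ 5 * m 2 + h ^ 4 * m 4 - h ^ 3 * m 6 + h ^ 2 * m 8)) := by
  refine ⟨antisymmetricQuotient m h, fun z hz _ => ?_, eval_antisymmetricQuotient m h⟩
  obtain ⟨w, rfl⟩ : ∃ w, h = z * w := ⟨h / z, (mul_div_cancel₀ h hz).symm⟩
  rw [mul_div_cancel_left₀ _ hz, hm, hm]
  exact sub_mul_eval_antisymmetricQuotient m z w

open Finset in
theorem stmt2 (u : Fin 8 → ℂ) (m : ℕ → ℂ)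
    (hm : ∀ z : ℂ, ∏ i, (z - u i) = ∑ i ∈ Finset.range 9, (-1 : ℂ) ^ i * m (8 - i) * z ^ i)
    (h : ℂ) (hh : h ≠ 0) :
    ∃ P : Polynomial ℂ,
      (∀ z : ℂ, z ≠ 0 → z ^ 2 ≠ h →
        (z - h / z) * P.eval (z + h / z) =
          z ^ 5 * (∏ i, (h / z - u i)) - (h / z) ^ 5 * ∏ i, (z - u i)) ∧
      (∀ x : ℂ, P.eval x =
        m 8 * x ^ 4 - h * m 7 * x ^ 3 + (h ^ 2 * m 6 - 3 * h * m 8 - h ^ 5 * m 0) * x ^ 2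
          + (2 * h ^ 2 * m 7 - h ^ 3 * m 5 + h ^ 5 * m 1) * x
          + (h ^ 6 * m 0 - h ^ 5 * m 2 + h ^ 4 * m 4 - h ^ 3 * m 6 + h ^ 2 * m 8)) :=
  stmt2_general u m hm h
end

section
/- With r as above and c the swap h₁ ↔ h₂, the composition T₁ = c∘r∘c∘r acts on parameters by T₁(h₁) = (h₁/q)v², T₁(h₂) = q·h₂·v², and T₁(u_i) = u_i·v for all i, where v = q·h₂/h₁. Consequently, after rescaling all of h₁ (by v⁻²), h₂ (by v⁻²), u_i (by v⁻¹), T₁ realizes the map (h₁, h₂, u₁,…,u₈) ↦ (h₁/q, h₂q, u₁,…,u₈). -/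
/-- The transformation s_{ij}, swapping u_i and u_j. -/
def sgen (i j : Fin 8) : ℂ × ℂ × (Fin 8 → ℂ) → ℂ × ℂ × (Fin 8 → ℂ) :=
  fun p => (p.1, p.2.1, p.2.2 ∘ Equiv.swap i j)

/-- The transformation μ_{ij}: h₁ ↦ h₁h₂/(u_iu_j), u_i ↦ h₂/u_j, u_j ↦ h₂/u_i. -/
noncomputable def mugen (i j : Fin 8) : ℂ × ℂ × (Fin 8 → ℂ) → ℂ × ℂ × (Fin 8 → ℂ) :=
  fun p => (p.1 * p.2.1 / (p.2.2 i * p.2.2 j), p.2.1,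
    fun k => if k = i then p.2.1 / p.2.2 j else if k = j then p.2.1 / p.2.2 i else p.2.2 k)

/-- The composition r = s₁₂μ₁₂ s₃₄μ₃₄ s₅₆μ₅₆ s₇₈μ₇₈. -/
noncomputable def rmap : ℂ × ℂ × (Fin 8 → ℂ) → ℂ × ℂ × (Fin 8 → ℂ) :=
  sgen 0 1 ∘ mugen 0 1 ∘ sgen 2 3 ∘ mugen 2 3 ∘ sgen 4 5 ∘ mugen 4 5 ∘ sgen 6 7 ∘ mugen 6 7

/-- The transformation c swapping h₁ and h₂. -/
def cswap : ℂ × ℂ × (Fin 8 → ℂ) → ℂ × ℂ × (Fin 8 → ℂ) :=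
  fun p => (p.2.1, p.1, p.2.2)

/-- The translation T₁ = c r c r. -/
noncomputable def T1 : ℂ × ℂ × (Fin 8 → ℂ) → ℂ × ℂ × (Fin 8 → ℂ) :=
  cswap ∘ rmap ∘ cswap ∘ rmap

/-!
Each `s_{ij} μ_{ij}` multiplies `h₁` by `h₂ / (u_i u_j)` and replaces `u_i, u_j` by
`h₂ / u_i, h₂ / u_j`. Since the four pairs are disjoint, `r` sends `(h₁, h₂, u)` to
`(h₁ h₂⁴ / ∏ u, h₂, h₂ / u)`; applying this twice, with `c` in between, gives a closed form
for `T₁` which is the claimed one once written in terms of `q` and `v`.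
-/

lemma sgen_mugen_apply (i j : Fin 8) (a b : ℂ) (w : Fin 8 → ℂ) :
    sgen i j (mugen i j (a, b, w)) =
      (a * b / (w i * w j), b, fun k => if k = i ∨ k = j then b / w k else w k) := by
  refine Prod.ext rfl (Prod.ext rfl (funext fun k => ?_))
  simp only [sgen, mugen, Function.comp_apply, Equiv.swap_apply_def]
  split_ifs <;> simp_all

lemma rmap_apply (a b : ℂ) (w : Fin 8 → ℂ) :
    rmap (a, b, w) = (a * b ^ 4 / ∏ i, w i, b, fun i => b / w i) := by
  simp only [rmap, Function.comp_apply, sgen_mugen_apply]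
  refine Prod.ext ?_ (Prod.ext rfl (funext fun i => ?_))
  · simp only [Fin.isValue, Fin.reduceEq, or_self, ↓reduceIte, Fin.prod_univ_eight]
    ring
  · fin_cases i <;> simp

lemma T1_apply (a b : ℂ) (w : Fin 8 → ℂ) :
    T1 (a, b, w) =
      (a * b ^ 4 / ∏ i, w i, b * (a * b ^ 4 / ∏ i, w i) ^ 4 / ∏ i, b / w i,
        fun i => a * b ^ 4 / (∏ i, w i) / (b / w i)) := by
  simp only [T1, cswap, Function.comp_apply, rmap_apply]

lemma T1_apply_eq {a b q v : ℂ} {w : Fin 8 → ℂ} (ha : a ≠ 0) (hb : b ≠ 0) (hw : ∀ i, w i ≠ 0)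
    (hq : q = a ^ 2 * b ^ 2 / ∏ i, w i) (hv : v = q * b / a) :
    T1 (a, b, w) = (a / q * v ^ 2, q * b * v ^ 2, fun i => w i * v) := by
  have hP : ∏ i, w i ≠ 0 := Finset.prod_ne_zero_iff.mpr fun i _ => hw i
  have hprod : ∏ i, b / w i = b ^ 8 / ∏ i, w i := by
    simp [Finset.prod_div_distrib]
  rw [T1_apply, hprod]
  subst hq hv
  refine Prod.ext ?_ (Prod.ext ?_ (funext fun i => ?_))
  · field_simp
  · field_simp
  · have hwi := hw i
    field_simp

theorem stmt15 (h₁ h₂ : ℂ) (u : Fin 8 → ℂ)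
    (hh₁ : h₁ ≠ 0) (hh₂ : h₂ ≠ 0) (hu : ∀ i, u i ≠ 0)
    (q v : ℂ) (hq : q = h₁ ^ 2 * h₂ ^ 2 / ∏ i, u i) (hv : v = q * h₂ / h₁) :
    ((T1 (h₁, h₂, u)).1 = h₁ / q * v ^ 2 ∧ (T1 (h₁, h₂, u)).2.1 = q * h₂ * v ^ 2 ∧
      ∀ i, (T1 (h₁, h₂, u)).2.2 i = u i * v) ∧
    ((T1 (h₁, h₂, u)).1 * v⁻¹ ^ 2 = h₁ / q ∧ (T1 (h₁, h₂, u)).2.1 * v⁻¹ ^ 2 = h₂ * q ∧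
      ∀ i, (T1 (h₁, h₂, u)).2.2 i * v⁻¹ = u i) := by
  have hq0 : q ≠ 0 := by
    rw [hq]
    exact div_ne_zero (by positivity) (Finset.prod_ne_zero_iff.mpr fun i _ => hu i)
  have hv0 : v ≠ 0 := by
    rw [hv]
    positivity
  rw [T1_apply_eq hh₁ hh₂ hu hq hv]
  refine ⟨⟨rfl, rfl, fun _ => rfl⟩, ?_, ?_, fun _ => ?_⟩ <;> field_simp
end

section
/- Let U(z) = ∏_{i=1}^{8}(z-u_i) with (u₁,…,u₈) = (b₁,b₂,b₃,b₄, ε/b₅, ε/b₆, ε/b₇, ε/b₈) and h₂ = ε/t, and let g be fixed nonzero. Then as ε → 0, P_n(h₂, g) → g⁴·B₁(1/g), where B₁(z) = ∏_{i=1}^{4}(1 - b_i z) and P_n is the explicit quartic built from the coefficients m_j of U and h = h₂. -/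
/-!
Write the roots as `u = (b₁, …, b₄, ε w₅, …, ε w₈)`. A `j`-subset of the roots contains at least
`j - 4` roots of order `ε`, so `m_j = O(ε^(j-4))`; hence the four terms of `P_n(ε/t, g)` carrying
negative powers of `h = ε/t` tend to `0`, while the rest is continuous at `ε = 0`. There
`m₅ = ⋯ = m₈ = 0`, and Vieta's formula for `U(z) = z⁴ ∏ (z - bᵢ)` identifies
`m₀g⁴ - m₁g³ + m₂g² - m₃g + m₄` with `∏ (g - bᵢ) = g⁴ B₁(1/g)`.
-/

open Finset Filter Topology Asymptotics

section CommSemiring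

variable {ι R : Type*} [DecidableEq ι] [CommSemiring R]
  {S : Finset ι} {v w : ι → R} {c : R}

theorem prod_eq_pow_card_inter_mul_prod (hS : ∀ i ∈ S, v i = c * w i)
    (hSc : ∀ i ∉ S, v i = w i) (s : Finset ι) :
    ∏ i ∈ s, v i = c ^ #(s ∩ S) * ∏ i ∈ s, w i :=
  calc ∏ i ∈ s, v i = ∏ i ∈ s, (if i ∈ S then c else 1) * w i :=
        prod_congr rfl fun i _ => by split_ifs with h <;> simp [hS, hSc, h]
    _ = c ^ #(s ∩ S) * ∏ i ∈ s, w i := by rw [prod_mul_distrib, prod_ite_mem, prod_const]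

variable [Fintype ι]

theorem esymm_map_eq_pow_mul (hS : ∀ i ∈ S, v i = c * w i) (hSc : ∀ i ∉ S, v i = w i)
    (j : ℕ) :
    (univ.val.map v).esymm j =
      c ^ (j - #Sᶜ) * ∑ s ∈ univ.powersetCard j, c ^ (#(s ∩ S) - (j - #Sᶜ)) * ∏ i ∈ s, w i := by
  rw [esymm_map_val, mul_sum]
  refine sum_congr rfl fun s hs => ?_
  rw [prod_eq_pow_card_inter_mul_prod hS hSc, ← mul_assoc, ← pow_add]
  have hsplit := card_inter_add_card_sdiff s S
  have hsdiff : #(s \ S) ≤ #Sᶜ := card_le_card fun i hi => by simpa using (mem_sdiff.1 hi).2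
  have hcard := (mem_powersetCard.1 hs).2
  congr 2
  omega

theorem esymm_map_eq_zero (hS : ∀ i ∈ S, v i = 0) {j : ℕ} (hj : #Sᶜ < j) :
    (univ.val.map v).esymm j = 0 := by
  rw [esymm_map_eq_pow_mul (S := S) (c := 0) (w := v) (fun i hi => by simp [hS i hi])
    (fun _ _ => rfl), zero_pow (by omega), zero_mul]

end CommSemiring

open Polynomial in
theorem prod_sub_eq_sum_esymm {ι R : Type*} [Fintype ι] [CommRing R] (v : ι → R) (x : R) :
    ∏ i, (x - v i) =
      ∑ j ∈ range (Fintype.card ι + 1),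
        (-1) ^ j * (univ.val.map v).esymm j * x ^ (Fintype.card ι - j) := by
  simpa [eval_prod, eval_finsetSum, mul_assoc] using
    congrArg (eval x) (Multiset.prod_X_sub_X_eq_sum_esymm (univ.val.map v))

section NormedField

variable {ι 𝕜 : Type*} [Fintype ι] [DecidableEq ι] [NormedField 𝕜]
  {S : Finset ι} {w : ι → 𝕜} {u : 𝕜 → ι → 𝕜}

theorem continuous_esymm_map (hS : ∀ ε, ∀ i ∈ S, u ε i = ε * w i)
    (hSc : ∀ ε, ∀ i ∉ S, u ε i = w i) (j : ℕ) :
    Continuous fun ε => (univ.val.map (u ε)).esymm j := by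
  simp only [fun ε => esymm_map_eq_pow_mul (hS ε) (hSc ε) j]
  fun_prop

theorem isBigO_esymm_map (hS : ∀ ε, ∀ i ∈ S, u ε i = ε * w i)
    (hSc : ∀ ε, ∀ i ∉ S, u ε i = w i) (j : ℕ) :
    (fun ε => (univ.val.map (u ε)).esymm j) =O[𝓝 0] fun ε => ε ^ (j - #Sᶜ) := by
  simp only [fun ε => esymm_map_eq_pow_mul (hS ε) (hSc ε) j]
  have hbdd := ((Continuous.tendsto (by fun_prop) 0).isBigO_one 𝕜 :
    (fun ε : 𝕜 => ∑ s ∈ univ.powersetCard j, ε ^ (#(s ∩ S) - (j - #Sᶜ)) * ∏ i ∈ s, w i)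
      =O[𝓝 0] fun _ => (1 : 𝕜))
  simpa using (isBigO_refl (fun ε : 𝕜 => ε ^ (j - #Sᶜ)) (𝓝 0)).mul hbdd

end NormedField

theorem tendsto_div_inv_pow_mul_of_isBigO {𝕜 : Type*} [NormedField 𝕜] {f : 𝕜 → 𝕜} {n k : ℕ}
    (hf : f =O[𝓝 0] fun ε => ε ^ n) (hkn : k < n) (t : 𝕜) :
    Tendsto (fun ε => (ε / t)⁻¹ ^ k * f ε) (𝓝[≠] 0) (𝓝 0) := by
  have hO : (fun ε => (ε / t)⁻¹ ^ k * f ε) =O[𝓝[≠] 0] fun ε => t ^ k * ε ^ (n - k) := by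
    refine ((isBigO_refl (fun ε => (ε / t)⁻¹ ^ k) _).mul (hf.mono nhdsWithin_le_nhds)).congr' .rfl ?_
    filter_upwards [self_mem_nhdsWithin] with ε hε
    rw [inv_div, div_pow, div_mul_eq_mul_div, div_eq_iff (pow_ne_zero k hε), mul_assoc, ← pow_add,
      Nat.sub_add_cancel hkn.le]
  refine hO.trans_tendsto ?_
  have hcont : Continuous fun ε : 𝕜 => t ^ k * ε ^ (n - k) := by fun_prop
  simpa [zero_pow (Nat.sub_ne_zero_of_lt hkn)] using (hcont.tendsto 0).mono_left nhdsWithin_le_nhds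

section Quartic

variable {𝕜 : Type*} [NormedField 𝕜]

def pnQuartic (m : ℕ → 𝕜) (h x : 𝕜) : 𝕜 :=
  m 0 * x ^ 4 - m 1 * x ^ 3 + (m 2 - 3 * h * m 0 - h⁻¹ ^ 3 * m 8) * x ^ 2
    + (2 * h * m 1 - m 3 + h⁻¹ ^ 2 * m 7) * x
    + (h ^ 2 * m 0 - h * m 2 + m 4 - h⁻¹ * m 6 + h⁻¹ ^ 2 * m 8)

theorem tendsto_pnQuartic {m : 𝕜 → ℕ → 𝕜} (hcont : ∀ j, ContinuousAt (fun ε => m ε j) 0)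
    (hO : ∀ j, (fun ε => m ε j) =O[𝓝 0] fun ε => ε ^ (j - 4)) (t x : 𝕜) :
    Tendsto (fun ε => pnQuartic (m ε) (ε / t) x) (𝓝[≠] 0)
      (𝓝 (m 0 0 * x ^ 4 - m 0 1 * x ^ 3 + m 0 2 * x ^ 2 - m 0 3 * x + m 0 4)) := by
  have hsmall : ∀ j k, k + 4 < j → Tendsto (fun ε => (ε / t)⁻¹ ^ k * m ε j) (𝓝[≠] 0) (𝓝 0) :=
    fun j k hkj => tendsto_div_inv_pow_mul_of_isBigO (hO j) (by omega) t
  have hregular : ContinuousAt (fun ε => m ε 0 * x ^ 4 - m ε 1 * x ^ 3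
      + (m ε 2 - 3 * (ε / t) * m ε 0) * x ^ 2 + (2 * (ε / t) * m ε 1 - m ε 3) * x
      + ((ε / t) ^ 2 * m ε 0 - (ε / t) * m ε 2 + m ε 4)) 0 := by
    have h0 := hcont 0; have h1 := hcont 1; have h2 := hcont 2; have h3 := hcont 3
    have h4 := hcont 4
    fun_prop
  have hsingular : Tendsto (fun ε => -((ε / t)⁻¹ ^ 3 * m ε 8 * x ^ 2) + (ε / t)⁻¹ ^ 2 * m ε 7 * x
      - (ε / t)⁻¹ ^ 1 * m ε 6 + (ε / t)⁻¹ ^ 2 * m ε 8) (𝓝[≠] 0) (𝓝 0) := by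
    simpa using ((((hsmall 8 3 (by norm_num)).mul_const (x ^ 2)).neg.add
      ((hsmall 7 2 (by norm_num)).mul_const x)).sub (hsmall 6 1 (by norm_num))).add
      (hsmall 8 2 (by norm_num))
  convert (hregular.tendsto.mono_left nhdsWithin_le_nhds).add hsingular using 2
  · rw [pnQuartic]
    ring
  · ring

end Quartic

theorem quartic_esymm_eq_prod_sub {R : Type*} [CommRing R] [IsDomain R] {v : Fin 8 → R}
    {e : ℕ → R} (he : ∀ j, e j = (univ.val.map v).esymm j)
    (hv : ∀ i ∈ ({4, 5, 6, 7} : Finset (Fin 8)), v i = 0) {x : R} (hx : x ≠ 0) :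
    e 0 * x ^ 4 - e 1 * x ^ 3 + e 2 * x ^ 2 - e 3 * x + e 4 =
      (x - v 0) * (x - v 1) * (x - v 2) * (x - v 3) := by
  have he_zero : ∀ j, 4 < j → e j = 0 := fun j hj => (he j).trans (esymm_map_eq_zero hv hj)
  have hvieta : ∏ i, (x - v i) = ∑ j ∈ range 9, (-1) ^ j * e j * x ^ (8 - j) := by
    simpa only [← he, Fintype.card_fin] using prod_sub_eq_sum_esymm v x
  simp only [sum_range_succ, sum_range_zero, Fin.prod_univ_eight, hv 4 (by decide),
    hv 5 (by decide), hv 6 (by decide), hv 7 (by decide)] at hvieta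
  refine mul_right_cancel₀ (pow_ne_zero 4 hx) ?_
  linear_combination -hvieta + x ^ 3 * he_zero 5 (by norm_num) - x ^ 2 * he_zero 6 (by norm_num)
    + x * he_zero 7 (by norm_num) - he_zero 8 (by norm_num)

open Finset in
theorem stmt16_general (b : Fin 8 → ℂ) (t : ℂ)
    (g : ℂ) (hg : g ≠ 0)
    (u : ℂ → Fin 8 → ℂ)
    (hu : ∀ ε, u ε = ![b 0, b 1, b 2, b 3, ε / b 4, ε / b 5, ε / b 6, ε / b 7])
    (m : ℂ → ℕ → ℂ)
    (hm : ∀ ε j, m ε j = ∑ s ∈ Finset.univ.powersetCard j, ∏ i ∈ s, u ε i)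
    (Pn : ℂ → ℂ)
    (hPn : ∀ ε, Pn ε =
      m ε 0 * g ^ 4 - m ε 1 * g ^ 3
        + (m ε 2 - 3 * (ε / t) * m ε 0 - (ε / t)⁻¹ ^ 3 * m ε 8) * g ^ 2
        + (2 * (ε / t) * m ε 1 - m ε 3 + (ε / t)⁻¹ ^ 2 * m ε 7) * g
        + ((ε / t) ^ 2 * m ε 0 - (ε / t) * m ε 2 + m ε 4 - (ε / t)⁻¹ * m ε 6
            + (ε / t)⁻¹ ^ 2 * m ε 8))
    (B₁ : ℂ → ℂ) (hB₁ : ∀ z, B₁ z = ∏ i ∈ ({0, 1, 2, 3} : Finset (Fin 8)), (1 - b i * z)) :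
    Filter.Tendsto Pn (nhdsWithin 0 {0}ᶜ) (nhds (g ^ 4 * B₁ (1 / g))) := by
  set S : Finset (Fin 8) := {4, 5, 6, 7}
  set w : Fin 8 → ℂ := ![b 0, b 1, b 2, b 3, (b 4)⁻¹, (b 5)⁻¹, (b 6)⁻¹, (b 7)⁻¹]
  have hS : ∀ ε, ∀ i ∈ S, u ε i = ε * w i := fun ε i hi => by
    fin_cases hi <;> simp [hu, w, div_eq_mul_inv]
  have hSc : ∀ ε, ∀ i ∉ S, u ε i = w i := fun ε i hi => by
    fin_cases i <;> simp_all [S, w]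
  have hm_esymm : ∀ ε j, m ε j = (univ.val.map (u ε)).esymm j := fun ε j => by
    rw [hm, esymm_map_val]
  have hSc_card : #Sᶜ = 4 := rfl
  have hlim := tendsto_pnQuartic (m := m)
    (fun j => by simpa only [hm_esymm] using (continuous_esymm_map hS hSc j).continuousAt)
    (fun j => by simpa only [hm_esymm, hSc_card] using isBigO_esymm_map hS hSc j) t g
  rw [show Pn = fun ε => pnQuartic (m ε) (ε / t) g from funext hPn]
  convert hlim using 2
  rw [quartic_esymm_eq_prod_sub (hm_esymm 0) (fun i hi => by simp [hS 0 i hi]) hg, hB₁]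
  simp [hu, field]

open Finset in
theorem stmt16 (b : Fin 8 → ℂ) (t : ℂ) (hb : ∀ i, b i ≠ 0) (ht : t ≠ 0)
    (g : ℂ) (hg : g ≠ 0)
    (u : ℂ → Fin 8 → ℂ)
    (hu : ∀ ε, u ε = ![b 0, b 1, b 2, b 3, ε / b 4, ε / b 5, ε / b 6, ε / b 7])
    (m : ℂ → ℕ → ℂ)
    (hm : ∀ ε j, m ε j = ∑ s ∈ Finset.univ.powersetCard j, ∏ i ∈ s, u ε i)
    (Pn : ℂ → ℂ)
    (hPn : ∀ ε, Pn ε =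
      m ε 0 * g ^ 4 - m ε 1 * g ^ 3
        + (m ε 2 - 3 * (ε / t) * m ε 0 - (ε / t)⁻¹ ^ 3 * m ε 8) * g ^ 2
        + (2 * (ε / t) * m ε 1 - m ε 3 + (ε / t)⁻¹ ^ 2 * m ε 7) * g
        + ((ε / t) ^ 2 * m ε 0 - (ε / t) * m ε 2 + m ε 4 - (ε / t)⁻¹ * m ε 6
            + (ε / t)⁻¹ ^ 2 * m ε 8))
    (B₁ : ℂ → ℂ) (hB₁ : ∀ z, B₁ z = ∏ i ∈ ({0, 1, 2, 3} : Finset (Fin 8)), (1 - b i * z)) :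
    Filter.Tendsto Pn (nhdsWithin 0 {0}ᶜ) (nhds (g ^ 4 * B₁ (1 / g))) :=
  stmt16_general b t g hg u hu m hm Pn hPn B₁ hB₁
end
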